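/- Let f ∈ Diff₀[0,1] with f continuously differentiable, let φ(x) = f(x) − x, set m = min_{[0,1]} φ' and M = max_{[0,1]} φ' (note m > −1), and let x₁ ∈ (0,1) with φ(x₁) > 0. Define x_{k+1} = f(x_k) for k ≥ 1. Then for every n ∈ ℕ one has φ(t) > 0 for all t ∈ [x₁, x_{n+1}], and n/(1+M) ≤ ∫_{x₁}^{x_{n+1}} dt/φ(t) ≤ n/(1+m). -/

import Mathlib

open Set Filter

/-- The sup norm over `[0,1]` of the derivative (within `[0,1]`) of a map. -/
noncomputable def supAbsDeriv (f : ℝ → ℝ) : ℝ :=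
  sSup ((fun x => |derivWithin f (Set.Icc (0:ℝ) 1) x|) '' Set.Icc (0:ℝ) 1)

/-- `IsDiff01 f g` says that `f` is a `C¹` diffeomorphism of `[0,1]` fixing `0` and `1`,
with everywhere positive derivative, and `g` is its inverse. -/
structure IsDiff01 (f g : ℝ → ℝ) : Prop where
  mapsTo : Set.MapsTo f (Set.Icc (0:ℝ) 1) (Set.Icc (0:ℝ) 1)
  inv_mapsTo : Set.MapsTo g (Set.Icc (0:ℝ) 1) (Set.Icc (0:ℝ) 1)
  left_inv : ∀ x ∈ Set.Icc (0:ℝ) 1, g (f x) = x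
  right_inv : ∀ x ∈ Set.Icc (0:ℝ) 1, f (g x) = x
  map_zero : f 0 = 0
  map_one : f 1 = 1
  contDiffOn : ContDiffOn ℝ 1 f (Set.Icc (0:ℝ) 1)
  inv_contDiffOn : ContDiffOn ℝ 1 g (Set.Icc (0:ℝ) 1)
  deriv_pos : ∀ x ∈ Set.Icc (0:ℝ) 1, 0 < derivWithin f (Set.Icc (0:ℝ) 1) x

/-- The growth sequence `Γ_n(f) = max (‖(fⁿ)'‖_∞, ‖(f⁻ⁿ)'‖_∞)`, where `g = f⁻¹`. -/
noncomputable def Gamma (f g : ℝ → ℝ) (n : ℕ) : ℝ :=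
  max (supAbsDeriv (f^[n])) (supAbsDeriv (g^[n]))

/-- `γ(f) = lim_n Γ_n(f)^(1/n) = 1`, where `g = f⁻¹`. -/
def GammaEqOne (f g : ℝ → ℝ) : Prop :=
  Filter.Tendsto (fun n : ℕ => (Gamma f g n) ^ (1/(n:ℝ))) Filter.atTop (nhds 1)

/-- A modulus of continuity: continuous, non-decreasing, nonnegative on `[0,1]`,
vanishing at `0`, and subadditive. -/
structure IsModCont (ω : ℝ → ℝ) : Prop where
  continuousOn : ContinuousOn ω (Set.Icc (0:ℝ) 1)
  monotoneOn : MonotoneOn ω (Set.Icc (0:ℝ) 1)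
  nonneg : ∀ x ∈ Set.Icc (0:ℝ) 1, 0 ≤ ω x
  map_zero : ω 0 = 0
  subadd : ∀ a b : ℝ, 0 ≤ a → 0 ≤ b → a + b ≤ 1 → ω (a + b) ≤ ω a + ω b

/-- Membership in `Diff₀^ω[0,1]`: the derivative of `f` has modulus of continuity
controlled by `ω` up to a multiplicative constant. -/
def InDiffOmega (ω f : ℝ → ℝ) : Prop :=
  ∃ C > 0, ∀ x ∈ Set.Icc (0:ℝ) 1, ∀ y ∈ Set.Icc (0:ℝ) 1,
    |derivWithin f (Set.Icc (0:ℝ) 1) x - derivWithin f (Set.Icc (0:ℝ) 1) y| ≤ C * ω |x - y|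

/-!
Write `φ t = f t - t`. The bounds `m ≤ φ' ≤ M` together with `φ 0 = φ 1 = 0 < φ x₁` force
`m ≤ 0 ≤ M`. On one step `[a, f a]` of the orbit, whose length is `φ a`, the mean value theorem
then pins `φ` between `(1 + m) φ a > 0` and `(1 + M) φ a`, so the integral of `1 / φ` over the
step lies in `[1 / (1 + M), 1 / (1 + m)]`. Positivity propagates along the orbit step by step,
and summing over the first `n` steps gives the claim.
-/

open MeasureTheory

theorem Convex.mul_sub_le_image_sub_of_le_derivWithin {D : Set ℝ} (hD : Convex ℝ D)
    {φ : ℝ → ℝ} (hφ : DifferentiableOn ℝ φ D) {C : ℝ}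
    (hC : ∀ x ∈ interior D, C ≤ derivWithin φ D x) :
    ∀ x ∈ D, ∀ y ∈ D, x ≤ y → C * (y - x) ≤ φ y - φ x :=
  hD.mul_sub_le_image_sub_of_le_deriv hφ.continuousOn (hφ.mono interior_subset) fun x hx => by
    simpa only [derivWithin_of_mem_nhds (mem_interior_iff_mem_nhds.1 hx)] using hC x hx

theorem Convex.image_sub_le_mul_sub_of_derivWithin_le {D : Set ℝ} (hD : Convex ℝ D)
    {φ : ℝ → ℝ} (hφ : DifferentiableOn ℝ φ D) {C : ℝ}
    (hC : ∀ x ∈ interior D, derivWithin φ D x ≤ C) :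
    ∀ x ∈ D, ∀ y ∈ D, x ≤ y → φ y - φ x ≤ C * (y - x) :=
  hD.image_sub_le_mul_sub_of_deriv_le hφ.continuousOn (hφ.mono interior_subset) fun x hx => by
    simpa only [derivWithin_of_mem_nhds (mem_interior_iff_mem_nhds.1 hx)] using hC x hx

theorem integral_one_div_mem_Icc {ψ : ℝ → ℝ} {a b c C : ℝ} (hab : a ≤ b) (hc : 0 < c)
    (hψ : ContinuousOn ψ (Icc a b)) (hψ_mem : ∀ t ∈ Icc a b, ψ t ∈ Icc c C) :
    IntervalIntegrable (fun t => 1 / ψ t) volume a b ∧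
      ∫ t in a..b, 1 / ψ t ∈ Icc ((b - a) / C) ((b - a) / c) := by
  have hψ_pos : ∀ t ∈ Icc a b, 0 < ψ t := fun t ht => hc.trans_le (hψ_mem t ht).1
  have hint : IntervalIntegrable (fun t => 1 / ψ t) volume a b :=
    (continuousOn_const.div hψ fun t ht => (hψ_pos t ht).ne').intervalIntegrable_of_Icc hab
  refine ⟨hint, ?_, ?_⟩
  · calc (b - a) / C = ∫ _ in a..b, 1 / C := by
          rw [intervalIntegral.integral_const, smul_eq_mul, mul_one_div]
      _ ≤ ∫ t in a..b, 1 / ψ t :=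
        intervalIntegral.integral_mono_on hab intervalIntegrable_const hint fun t ht =>
          one_div_le_one_div_of_le (hψ_pos t ht) (hψ_mem t ht).2
  · calc ∫ t in a..b, 1 / ψ t ≤ ∫ _ in a..b, 1 / c :=
        intervalIntegral.integral_mono_on hab hint intervalIntegrable_const fun t ht =>
          one_div_le_one_div_of_le hc (hψ_mem t ht).1
      _ = (b - a) / c := by
          rw [intervalIntegral.integral_const, smul_eq_mul, mul_one_div]

section Displacement

variable {f : ℝ → ℝ} {s : Set ℝ} {m M : ℝ}

theorem displacement_mem_Icc_on_step (hs : OrdConnected s)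
    (hlo : ∀ a ∈ s, ∀ t ∈ s, a ≤ t → m * (t - a) ≤ (f t - t) - (f a - a))
    (hhi : ∀ a ∈ s, ∀ t ∈ s, a ≤ t → (f t - t) - (f a - a) ≤ M * (t - a))
    (hm : m ≤ 0) (hM : 0 ≤ M) {a : ℝ} (ha : a ∈ s) (hfa : f a ∈ s) :
    ∀ t ∈ Icc a (f a), f t - t ∈ Icc ((1 + m) * (f a - a)) ((1 + M) * (f a - a)) := by
  intro t ht
  have hts : t ∈ s := hs.out ha hfa ht
  have := hlo a ha t hts ht.1
  have := hhi a ha t hts ht.1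
  constructor <;> nlinarith [ht.1, ht.2]

theorem integral_one_div_displacement_on_step (hs : OrdConnected s) (hf : ContinuousOn f s)
    (hlo : ∀ a ∈ s, ∀ t ∈ s, a ≤ t → m * (t - a) ≤ (f t - t) - (f a - a))
    (hhi : ∀ a ∈ s, ∀ t ∈ s, a ≤ t → (f t - t) - (f a - a) ≤ M * (t - a))
    (hm1 : -1 < m) (hm : m ≤ 0) (hM : 0 ≤ M) {a : ℝ} (ha : a ∈ s) (hfa : f a ∈ s)
    (hφa : 0 < f a - a) :
    (∀ t ∈ Icc a (f a), 0 < f t - t) ∧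
      IntervalIntegrable (fun t => 1 / (f t - t)) volume a (f a) ∧
      ∫ t in a..f a, 1 / (f t - t) ∈ Icc (1 / (1 + M)) (1 / (1 + m)) := by
  have hbounds := displacement_mem_Icc_on_step hs hlo hhi hm hM ha hfa
  have hc : 0 < (1 + m) * (f a - a) := mul_pos (by linarith) hφa
  obtain ⟨hint, hlow, hup⟩ := integral_one_div_mem_Icc (ψ := fun t => f t - t) (by linarith) hc
    ((hf.mono (hs.out ha hfa)).sub continuousOn_id) hbounds
  refine ⟨fun t ht => hc.trans_le (hbounds t ht).1, hint, ?_, ?_⟩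
  · convert hlow using 1
    field_simp
  · convert hup using 1
    field_simp

theorem integral_one_div_displacement_on_orbit {lo hi : ℝ} (hf : MapsTo f s s)
    (hstep : ∀ a ∈ s, 0 < f a - a →
      (∀ t ∈ Icc a (f a), 0 < f t - t) ∧
        IntervalIntegrable (fun t => 1 / (f t - t)) volume a (f a) ∧
        ∫ t in a..f a, 1 / (f t - t) ∈ Icc lo hi)
    {x : ℝ} (hx : x ∈ s) (hφx : 0 < f x - x) (n : ℕ) :
    (∀ t ∈ Icc x (f^[n] x), 0 < f t - t) ∧
      ∫ t in x..f^[n] x, 1 / (f t - t) ∈ Icc (n * lo) (n * hi) := by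
  have horbit : ∀ k, f^[k] x ∈ s ∧ 0 < f (f^[k] x) - f^[k] x := by
    intro k
    induction k with
    | zero => exact ⟨hx, hφx⟩
    | succ k ih =>
      rw [Function.iterate_succ_apply']
      exact ⟨hf ih.1, (hstep _ ih.1 ih.2).1 _ ⟨by linarith [ih.2], le_rfl⟩⟩
  have horbit_step : ∀ k, (∀ t ∈ Icc (f^[k] x) (f^[k + 1] x), 0 < f t - t) ∧
      IntervalIntegrable (fun t => 1 / (f t - t)) volume (f^[k] x) (f^[k + 1] x) ∧
      ∫ t in f^[k] x..f^[k + 1] x, 1 / (f t - t) ∈ Icc lo hi := fun k => by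
    rw [Function.iterate_succ_apply']
    exact hstep _ (horbit k).1 (horbit k).2
  refine ⟨?_, ?_⟩
  · induction n with
    | zero =>
      intro t ht
      rw [Function.iterate_zero_apply] at ht
      rwa [le_antisymm ht.2 ht.1]
    | succ n ih =>
      intro t ht
      rcases le_total t (f^[n] x) with htn | htn
      · exact ih t ⟨ht.1, htn⟩
      · exact (horbit_step n).1 t ⟨htn, ht.2⟩
  · have hsplit := intervalIntegral.sum_integral_adjacent_intervals
      (a := fun k => f^[k] x) (n := n) fun k _ => (horbit_step k).2.1
    rw [Function.iterate_zero_apply] at hsplit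
    rw [← hsplit]
    constructor
    · simpa using Finset.sum_le_sum (s := Finset.range n) fun k _ => (horbit_step k).2.2.1
    · simpa using Finset.sum_le_sum (s := Finset.range n) fun k _ => (horbit_step k).2.2.2

end Displacement

/-- **Claim 1(b).** With notation as in Claim 1(a), for an orbit `x_{k+1} = f(x_k)` starting
at `x₁ ∈ (0,1)` with `φ(x₁) > 0`: `φ > 0` on `[x₁, x_{n+1}]` and
`n/(1+M) ≤ ∫_{x₁}^{x_{n+1}} dt/φ(t) ≤ n/(1+m)`. -/
theorem displacement_integral_bound (f g : ℝ → ℝ) (hf : IsDiff01 f g)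
    (m M : ℝ)
    (hm : IsLeast
      ((fun x => derivWithin (fun y => f y - y) (Set.Icc (0:ℝ) 1) x) '' Set.Icc (0:ℝ) 1) m)
    (hM : IsGreatest
      ((fun x => derivWithin (fun y => f y - y) (Set.Icc (0:ℝ) 1) x) '' Set.Icc (0:ℝ) 1) M)
    (hm1 : -1 < m)
    (x₁ : ℝ) (hx₁ : x₁ ∈ Set.Ioo (0:ℝ) 1) (hφx₁ : 0 < f x₁ - x₁) :
    ∀ n : ℕ, 1 ≤ n →
      (∀ t ∈ Set.Icc x₁ (f^[n] x₁), 0 < f t - t) ∧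
      (n:ℝ) / (1 + M) ≤ (∫ t in x₁..(f^[n] x₁), 1 / (f t - t)) ∧
      (∫ t in x₁..(f^[n] x₁), 1 / (f t - t)) ≤ (n:ℝ) / (1 + m) := by
  intro n _
  have hφ : DifferentiableOn ℝ (fun y => f y - y) (Icc 0 1) :=
    (hf.contDiffOn.differentiableOn one_ne_zero).sub differentiableOn_id
  have hlo := (convex_Icc (0 : ℝ) 1).mul_sub_le_image_sub_of_le_derivWithin hφ
    fun x hx => hm.2 ⟨x, interior_subset hx, rfl⟩
  have hhi := (convex_Icc (0 : ℝ) 1).image_sub_le_mul_sub_of_derivWithin_le hφ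
    fun x hx => hM.2 ⟨x, interior_subset hx, rfl⟩
  have hx₁' : x₁ ∈ Icc (0 : ℝ) 1 := Ioo_subset_Icc_self hx₁
  have hm0 : m ≤ 0 := by
    have := hlo x₁ hx₁' 1 (right_mem_Icc.2 zero_le_one) hx₁.2.le
    rw [hf.map_one] at this
    nlinarith [hx₁.2]
  have hM0 : 0 ≤ M := by
    have := hhi 0 (left_mem_Icc.2 zero_le_one) x₁ hx₁' hx₁.1.le
    rw [hf.map_zero] at this
    nlinarith [hx₁.1]
  obtain ⟨hpos, hlow, hup⟩ := integral_one_div_displacement_on_orbit hf.mapsTo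
    (fun a ha hφa => integral_one_div_displacement_on_step ordConnected_Icc hf.contDiffOn.continuousOn hlo hhi hm1
      hm0 hM0 ha (hf.mapsTo ha) hφa) hx₁' hφx₁ n
  exact ⟨hpos, by simpa only [mul_one_div] using hlow, by simpa only [mul_one_div] using hup⟩
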